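/- arXiv:1703.04864 — 6 statements merged into one kernel-verified Lean document; each statement's English description precedes it below -/
import Mathlib

section
/- Let B ∈ ℝ^{n×q}, A ∈ ℝ^{n×m}, Φ a set of m×q matrices, and f a mapping satisfying f(X, W·A) = W·f(X,A) for all weight matrices W. Let C_1,…,C_K partition {1,…,n}, with aggregated data B_k^agg = (1/|C_k|)∑_{i∈C_k} B_i and A_k^agg = (1/|C_k|)∑_{i∈C_k} A_i. Then for every X ∈ Φ: ∑_{k=1}^K |C_k| · ‖B_k^agg − f_k(X, A^agg)‖₁ ≤ ‖B − f(X,A)‖₁, i.e., the aggregated objective is a lower bound on the original objective for every feasible X. -/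
/-!
Aggregation is left multiplication by the cluster-averaging matrix `W`, so the aggregation
assumption gives `f X Aagg = W * f X A`: each aggregated residual row is the mean of the
residual rows of its cluster, and the triangle inequality bounds `|C_k|` times the L1 norm of
that mean by the sum of the L1 norms of the rows it averages.
-/

open Finset

theorem card_mul_abs_sum_div_card_le {ι : Type*} (s : Finset ι) (g : ι → ℝ) :
    (#s : ℝ) * |(∑ i ∈ s, g i) / #s| ≤ ∑ i ∈ s, |g i| := by
  rcases s.eq_empty_or_nonempty with rfl | hs
  · simp
  · have hcard : (0 : ℝ) < #s := by exact_mod_cast hs.card_pos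
    rw [abs_div, abs_of_pos hcard, mul_div_cancel₀ _ hcard.ne']
    exact abs_sum_le_sum_abs _ _

theorem card_mul_sum_abs_mean_sub_mean_le {ι α : Type*} [Fintype α] (s : Finset ι)
    (u v : ι → α → ℝ) :
    (#s : ℝ) * ∑ j, |(∑ i ∈ s, u i j) / #s - (∑ i ∈ s, v i j) / #s| ≤
      ∑ i ∈ s, ∑ j, |u i j - v i j| := by
  rw [mul_sum, sum_comm]
  refine sum_le_sum fun j _ => ?_
  rw [div_sub_div_same, ← sum_sub_distrib]
  exact card_mul_abs_sum_div_card_le s fun i => u i j - v i j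

section ClusterMean

variable {ι κ α : Type*} [Fintype ι] [DecidableEq κ]

/-- Row `k` averages the rows of the cluster `c⁻¹ {k}` (and is zero if that cluster is empty). -/
noncomputable def clusterMean (c : ι → κ) : Matrix κ ι ℝ :=
  fun k i => if c i = k then ((univ.filter fun i => c i = k).card : ℝ)⁻¹ else 0

theorem clusterMean_mul_apply (c : ι → κ) (M : Matrix ι α ℝ) (k : κ) (j : α) :
    (clusterMean c * M) k j =
      (∑ i ∈ univ.filter (fun i => c i = k), M i j) /
        ((univ.filter fun i => c i = k).card : ℝ) := by
  simp only [Matrix.mul_apply, clusterMean, ite_mul, zero_mul]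
  rw [← sum_filter, ← mul_sum, inv_mul_eq_div]

theorem sum_card_mul_sum_abs_clusterMean_mul_sub_le [Fintype κ] [Fintype α] (c : ι → κ)
    (U V : Matrix ι α ℝ) :
    ∑ k, ((univ.filter fun i => c i = k).card : ℝ) *
        ∑ j, |(clusterMean c * U) k j - (clusterMean c * V) k j| ≤
      ∑ i, ∑ j, |U i j - V i j| := by
  calc _ ≤ ∑ k, ∑ i ∈ univ.filter (fun i => c i = k), ∑ j, |U i j - V i j| :=
        sum_le_sum fun k _ => by
          simpa only [clusterMean_mul_apply] using card_mul_sum_abs_mean_sub_mean_le _ U V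
    _ = ∑ i, ∑ j, |U i j - V i j| := sum_fiberwise _ _ _

end ClusterMean

theorem stmt_4_general {m q n K : ℕ}
    (f : ∀ {r : ℕ}, Matrix (Fin m) (Fin q) ℝ → Matrix (Fin r) (Fin m) ℝ →
      Matrix (Fin r) (Fin q) ℝ)
    (hf : ∀ {p r : ℕ} (X : Matrix (Fin m) (Fin q) ℝ)
      (W : Matrix (Fin p) (Fin r) ℝ) (A : Matrix (Fin r) (Fin m) ℝ),
      f X (W * A) = W * f X A)
    (c : Fin n → Fin K)
    (B : Matrix (Fin n) (Fin q) ℝ) (A : Matrix (Fin n) (Fin m) ℝ)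
    (Bagg : Matrix (Fin K) (Fin q) ℝ) (Aagg : Matrix (Fin K) (Fin m) ℝ)
    (hBagg : ∀ k j, Bagg k j =
      (∑ i ∈ univ.filter (fun i => c i = k), B i j) /
        ((univ.filter (fun i => c i = k)).card : ℝ))
    (hAagg : ∀ k j, Aagg k j =
      (∑ i ∈ univ.filter (fun i => c i = k), A i j) /
        ((univ.filter (fun i => c i = k)).card : ℝ))
    (Φ : Set (Matrix (Fin m) (Fin q) ℝ)) :
    ∀ X ∈ Φ,
      (∑ k, ((univ.filter (fun i => c i = k)).card : ℝ) *
        ∑ j, |Bagg k j - f X Aagg k j|) ≤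
      ∑ i, ∑ j, |B i j - f X A i j| := by
  intro X _
  have hB : Bagg = clusterMean c * B := by ext k j; rw [hBagg, clusterMean_mul_apply]
  have hA : Aagg = clusterMean c * A := by ext k j; rw [hAagg, clusterMean_mul_apply]
  rw [hB, hA, hf]
  exact sum_card_mul_sum_abs_clusterMean_mul_sub_le c B (f X A)

/-- The weighted aggregated L1 objective is a lower bound on the original L1
objective for every feasible `X`. -/
theorem stmt_4 {m q n K : ℕ}
    (f : ∀ {r : ℕ}, Matrix (Fin m) (Fin q) ℝ → Matrix (Fin r) (Fin m) ℝ →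
      Matrix (Fin r) (Fin q) ℝ)
    (hf : ∀ {p r : ℕ} (X : Matrix (Fin m) (Fin q) ℝ)
      (W : Matrix (Fin p) (Fin r) ℝ) (A : Matrix (Fin r) (Fin m) ℝ),
      f X (W * A) = W * f X A)
    (c : Fin n → Fin K) (hc : ∀ k : Fin K, ∃ i, c i = k)
    (B : Matrix (Fin n) (Fin q) ℝ) (A : Matrix (Fin n) (Fin m) ℝ)
    (Bagg : Matrix (Fin K) (Fin q) ℝ) (Aagg : Matrix (Fin K) (Fin m) ℝ)
    (hBagg : ∀ k j, Bagg k j =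
      (∑ i ∈ univ.filter (fun i => c i = k), B i j) /
        ((univ.filter (fun i => c i = k)).card : ℝ))
    (hAagg : ∀ k j, Aagg k j =
      (∑ i ∈ univ.filter (fun i => c i = k), A i j) /
        ((univ.filter (fun i => c i = k)).card : ℝ))
    (Φ : Set (Matrix (Fin m) (Fin q) ℝ)) :
    ∀ X ∈ Φ,
      (∑ k, ((univ.filter (fun i => c i = k)).card : ℝ) *
        ∑ j, |Bagg k j - f X Aagg k j|) ≤
      ∑ i, ∑ j, |B i j - f X A i j| :=
  stmt_4_general f hf c B A Bagg Aagg hBagg hAagg Φ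
end

section
/- In the setting of the aggregated L1-fitting problem, let X̄ be an optimal solution of the aggregated problem min_{X ∈ Φ} ∑_{k=1}^K |C_k| ‖B_k^agg − f_k(X, A^agg)‖₁. Suppose that for every cluster k and every coordinate j ∈ {1,…,q}, the residuals (B_i − f_i(X̄, A))_j for i ∈ C_k all have the same sign. Then X̄ is a global optimum of the original problem min_{X ∈ Φ} ‖B − f(X,A)‖₁. -/
/-!
Because `f X (W * A) = W * f X A`, the aggregated residuals `Bagg - f X Aagg` are the
cluster means of the original residuals `r(X) = B - f X A`. Weighting cluster `k` by `|C_k|`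
therefore turns the aggregated objective into `∑ₖ ∑ⱼ |∑_{i ∈ C_k} rᵢⱼ(X)|`. By the
triangle inequality this is at most the original objective, with equality at `X̄` when the
residuals of each cluster share their sign in each coordinate. Hence
`obj X̄ = agg X̄ ≤ agg X ≤ obj X`.
-/

open Finset

section ClusterAggregation

variable {ι κ σ : Type*} (α : Type*)

/-- An empty cluster gives a zero row (`0⁻¹ = 0`), matching `0 / 0 = 0` in the cluster means. -/
def clusterMeanMatrix [Field α] [Fintype ι] [DecidableEq κ] (c : ι → κ) : Matrix κ ι α :=
  fun k i => if c i = k then ((univ.filter fun i => c i = k).card : α)⁻¹ else 0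

variable {α}

theorem clusterMeanMatrix_mul_apply [Field α] [DecidableEq κ] [Fintype ι]
    (c : ι → κ) (M : Matrix ι σ α) (k : κ) (j : σ) :
    (clusterMeanMatrix α c * M) k j =
      (∑ i ∈ univ.filter (fun i => c i = k), M i j) /
        ((univ.filter (fun i => c i = k)).card : α) := by
  rw [Matrix.mul_apply, sum_filter, sum_div]
  simp only [clusterMeanMatrix, ite_mul, zero_mul, div_eq_inv_mul, mul_ite, mul_zero]

theorem card_mul_abs_sum_div_card [Field α] [LinearOrder α] [IsStrictOrderedRing α]
    (s : Finset ι) (x : ι → α) :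
    (#s : α) * |(∑ i ∈ s, x i) / #s| = |∑ i ∈ s, x i| := by
  rcases s.eq_empty_or_nonempty with rfl | hs
  · simp
  · rw [abs_div, Nat.abs_cast, mul_div_cancel₀ _ (by exact_mod_cast hs.card_pos.ne')]

theorem Finset.abs_sum_eq_sum_abs_of_nonneg_or_nonpos [AddCommGroup α]
    [LinearOrder α] [IsOrderedAddMonoid α] {s : Finset ι} {x : ι → α}
    (hx : (∀ i ∈ s, 0 ≤ x i) ∨ (∀ i ∈ s, x i ≤ 0)) :
    |∑ i ∈ s, x i| = ∑ i ∈ s, |x i| := by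
  rcases hx with hx | hx
  · rw [abs_of_nonneg (sum_nonneg hx)]
    exact sum_congr rfl fun i hi => (abs_of_nonneg (hx i hi)).symm
  · rw [abs_of_nonpos (sum_nonpos hx), ← sum_neg_distrib]
    exact sum_congr rfl fun i hi => (abs_of_nonpos (hx i hi)).symm

theorem sum_sum_sum_fiberwise {M : Type*} [AddCommMonoid M] [DecidableEq κ] [Fintype ι]
    [Fintype κ] [Fintype σ] (c : ι → κ) (g : ι → σ → M) :
    ∑ k, ∑ j, ∑ i ∈ univ.filter (fun i => c i = k), g i j = ∑ i, ∑ j, g i j := by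
  simp_rw [sum_comm (s := univ (α := σ))]
  exact sum_fiberwise univ c _

def clusterL1 [AddCommGroup α] [Lattice α] [DecidableEq κ] [Fintype ι] [Fintype κ]
    [Fintype σ] (c : ι → κ) (R : Matrix ι σ α) : α :=
  ∑ k, ∑ j, |∑ i ∈ univ.filter (fun i => c i = k), R i j|

theorem clusterL1_le [AddCommGroup α] [LinearOrder α] [IsOrderedAddMonoid α]
    [DecidableEq κ] [Fintype ι] [Fintype κ] [Fintype σ] (c : ι → κ) (R : Matrix ι σ α) :
    clusterL1 c R ≤ ∑ i, ∑ j, |R i j| := by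
  calc clusterL1 c R ≤ ∑ k, ∑ j, ∑ i ∈ univ.filter (fun i => c i = k), |R i j| :=
        sum_le_sum fun k _ => sum_le_sum fun j _ => abs_sum_le_sum_abs _ _
    _ = ∑ i, ∑ j, |R i j| := sum_sum_sum_fiberwise c _

theorem clusterL1_eq_of_sign [AddCommGroup α] [LinearOrder α] [IsOrderedAddMonoid α]
    [DecidableEq κ] [Fintype ι] [Fintype κ] [Fintype σ] (c : ι → κ) (R : Matrix ι σ α)
    (hR : ∀ k j, (∀ i ∈ univ.filter (fun i => c i = k), 0 ≤ R i j) ∨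
      (∀ i ∈ univ.filter (fun i => c i = k), R i j ≤ 0)) :
    clusterL1 c R = ∑ i, ∑ j, |R i j| := by
  calc clusterL1 c R = ∑ k, ∑ j, ∑ i ∈ univ.filter (fun i => c i = k), |R i j| :=
        sum_congr rfl fun k _ => sum_congr rfl fun j _ =>
          abs_sum_eq_sum_abs_of_nonneg_or_nonpos (hR k j)
    _ = ∑ i, ∑ j, |R i j| := sum_sum_sum_fiberwise c _

theorem sum_card_mul_sum_abs_clusterMeanMatrix_mul [Field α] [LinearOrder α]
    [IsStrictOrderedRing α] [DecidableEq κ] [Fintype ι] [Fintype κ] [Fintype σ]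
    (c : ι → κ) (R : Matrix ι σ α) :
    ∑ k, ((univ.filter (fun i => c i = k)).card : α) *
        ∑ j, |(clusterMeanMatrix α c * R) k j| = clusterL1 c R := by
  simp only [clusterMeanMatrix_mul_apply, mul_sum, card_mul_abs_sum_div_card, clusterL1]

end ClusterAggregation

theorem stmt_5_general {m q n K : ℕ}
    (f : ∀ {r : ℕ}, Matrix (Fin m) (Fin q) ℝ → Matrix (Fin r) (Fin m) ℝ →
      Matrix (Fin r) (Fin q) ℝ)
    (hf : ∀ {p r : ℕ} (X : Matrix (Fin m) (Fin q) ℝ)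
      (W : Matrix (Fin p) (Fin r) ℝ) (A : Matrix (Fin r) (Fin m) ℝ),
      f X (W * A) = W * f X A)
    (c : Fin n → Fin K)
    (B : Matrix (Fin n) (Fin q) ℝ) (A : Matrix (Fin n) (Fin m) ℝ)
    (Bagg : Matrix (Fin K) (Fin q) ℝ) (Aagg : Matrix (Fin K) (Fin m) ℝ)
    (hBagg : ∀ k j, Bagg k j =
      (∑ i ∈ univ.filter (fun i => c i = k), B i j) /
        ((univ.filter (fun i => c i = k)).card : ℝ))
    (hAagg : ∀ k j, Aagg k j =
      (∑ i ∈ univ.filter (fun i => c i = k), A i j) /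
        ((univ.filter (fun i => c i = k)).card : ℝ))
    (Φ : Set (Matrix (Fin m) (Fin q) ℝ))
    (Xbar : Matrix (Fin m) (Fin q) ℝ)
    (hopt : ∀ X ∈ Φ,
      (∑ k, ((univ.filter (fun i => c i = k)).card : ℝ) *
        ∑ j, |Bagg k j - f Xbar Aagg k j|) ≤
      (∑ k, ((univ.filter (fun i => c i = k)).card : ℝ) *
        ∑ j, |Bagg k j - f X Aagg k j|))
    (hsign : ∀ k : Fin K, ∀ j : Fin q,
      (∀ i ∈ univ.filter (fun i => c i = k), 0 ≤ B i j - f Xbar A i j) ∨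
      (∀ i ∈ univ.filter (fun i => c i = k), B i j - f Xbar A i j ≤ 0)) :
    ∀ X ∈ Φ,
      (∑ i, ∑ j, |B i j - f Xbar A i j|) ≤ ∑ i, ∑ j, |B i j - f X A i j| := by
  set M := clusterMeanMatrix ℝ c
  have hB : Bagg = M * B := Matrix.ext fun k j => by rw [hBagg, clusterMeanMatrix_mul_apply]
  have hA : Aagg = M * A := Matrix.ext fun k j => by rw [hAagg, clusterMeanMatrix_mul_apply]
  have agg_eq_clusterL1 : ∀ Y,
      (∑ k, ((univ.filter (fun i => c i = k)).card : ℝ) * ∑ j, |Bagg k j - f Y Aagg k j|) =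
        clusterL1 c (B - f Y A) := fun Y => by
    rw [← sum_card_mul_sum_abs_clusterMeanMatrix_mul, Matrix.mul_sub, ← hB, ← hf, ← hA]
    rfl
  intro X hX
  calc ∑ i, ∑ j, |B i j - f Xbar A i j|
      = clusterL1 c (B - f Xbar A) := (clusterL1_eq_of_sign c _ hsign).symm
    _ = _ := (agg_eq_clusterL1 Xbar).symm
    _ ≤ _ := hopt X hX
    _ = clusterL1 c (B - f X A) := agg_eq_clusterL1 X
    _ ≤ _ := clusterL1_le c _

/-- Lemma 2 of the paper (optimality condition): if `X̄` optimally solves the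
weighted aggregated problem and within every cluster the residuals share
coordinatewise signs, then `X̄` is a global optimum of the original problem. -/
theorem stmt_5 {m q n K : ℕ}
    (f : ∀ {r : ℕ}, Matrix (Fin m) (Fin q) ℝ → Matrix (Fin r) (Fin m) ℝ →
      Matrix (Fin r) (Fin q) ℝ)
    (hf : ∀ {p r : ℕ} (X : Matrix (Fin m) (Fin q) ℝ)
      (W : Matrix (Fin p) (Fin r) ℝ) (A : Matrix (Fin r) (Fin m) ℝ),
      f X (W * A) = W * f X A)
    (c : Fin n → Fin K) (hc : ∀ k : Fin K, ∃ i, c i = k)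
    (B : Matrix (Fin n) (Fin q) ℝ) (A : Matrix (Fin n) (Fin m) ℝ)
    (Bagg : Matrix (Fin K) (Fin q) ℝ) (Aagg : Matrix (Fin K) (Fin m) ℝ)
    (hBagg : ∀ k j, Bagg k j =
      (∑ i ∈ univ.filter (fun i => c i = k), B i j) /
        ((univ.filter (fun i => c i = k)).card : ℝ))
    (hAagg : ∀ k j, Aagg k j =
      (∑ i ∈ univ.filter (fun i => c i = k), A i j) /
        ((univ.filter (fun i => c i = k)).card : ℝ))
    (Φ : Set (Matrix (Fin m) (Fin q) ℝ))
    (Xbar : Matrix (Fin m) (Fin q) ℝ) (hXbar : Xbar ∈ Φ)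
    (hopt : ∀ X ∈ Φ,
      (∑ k, ((univ.filter (fun i => c i = k)).card : ℝ) *
        ∑ j, |Bagg k j - f Xbar Aagg k j|) ≤
      (∑ k, ((univ.filter (fun i => c i = k)).card : ℝ) *
        ∑ j, |Bagg k j - f X Aagg k j|))
    (hsign : ∀ k : Fin K, ∀ j : Fin q,
      (∀ i ∈ univ.filter (fun i => c i = k), 0 ≤ B i j - f Xbar A i j) ∨
      (∀ i ∈ univ.filter (fun i => c i = k), B i j - f Xbar A i j ≤ 0)) :
    ∀ X ∈ Φ,
      (∑ i, ∑ j, |B i j - f Xbar A i j|) ≤ ∑ i, ∑ j, |B i j - f X A i j| :=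
  stmt_5_general f hf c B A Bagg Aagg hBagg hAagg Φ Xbar hopt hsign
end

section
/- Consider two partitions C^{t−1} and C^t of {1,…,n} such that C^t refines C^{t−1} (every cluster of C^t is contained in some cluster of C^{t−1}). Let F(C) = min_{X ∈ Φ} ∑_{k} |C_k| ‖B_k^agg(C) − f_k(X, A^agg(C))‖₁ denote the optimal value of the aggregated problem for partition C, where aggregated data is given by within-cluster arithmetic means. If f satisfies f(X, WA) = W f(X,A), then F(C^{t−1}) ≤ F(C^t): the optimal aggregated objective is nondecreasing under refinement of the partition. -/
/-! Every cluster of the coarse partition is a union of clusters of the fine one, so the coarse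
means are weighted averages of the fine means: `Magg₁ = S₁ E₂ Magg₂`, where `S₁` averages over
the coarse clusters and `E₂` copies each fine mean back to the points of its cluster. Since `f`
commutes with left multiplication, the coarse residual at the fine optimum `X₂` is `S₁ E₂` times
the fine residual, and the triangle inequality bounds its size-weighted `L¹` norm by that of the
fine residual. Optimality of `X₁` for the coarse problem finishes the proof. -/

open Finset

section Aggregation

variable {ι κ κ₁ κ₂ β : Type*} [DecidableEq κ] [DecidableEq κ₁] [DecidableEq κ₂]

def indicatorMatrix (c : ι → κ) : Matrix ι κ ℝ := fun i k => if c i = k then 1 else 0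

theorem indicatorMatrix_mul_apply [Fintype κ] (c : ι → κ) (M : Matrix κ β ℝ) (i : ι) (j : β) :
    (indicatorMatrix c * M) i j = M (c i) j := by
  simp [Matrix.mul_apply, indicatorMatrix]

variable [Fintype ι]

def clusterSize (c : ι → κ) (k : κ) : ℝ := #{i | c i = k}

noncomputable def avgMatrix (c : ι → κ) : Matrix κ ι ℝ :=
  fun k i => if c i = k then (clusterSize c k)⁻¹ else 0

def weightedL1 [Fintype κ] [Fintype β] (c : ι → κ) (R : Matrix κ β ℝ) : ℝ :=
  ∑ k, clusterSize c k * ∑ j, |R k j|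

theorem clusterSize_apply_ne_zero (c : ι → κ) (i : ι) : clusterSize c (c i) ≠ 0 := by
  simp [clusterSize]

theorem sum_comp_eq_sum_clusterSize_mul [Fintype κ] (c : ι → κ) (g : κ → ℝ) :
    ∑ i, g (c i) = ∑ k, clusterSize c k * g k := by
  rw [← sum_fiberwise univ c]
  refine sum_congr rfl fun k _ => ?_
  rw [sum_congr rfl fun i hi => congrArg g (mem_filter.1 hi).2, sum_const, nsmul_eq_mul]
  rfl

theorem avgMatrix_mul_apply (c : ι → κ) (M : Matrix ι β ℝ) (k : κ) (j : β) :
    (avgMatrix c * M) k j = (∑ i with c i = k, M i j) / clusterSize c k := by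
  simp only [Matrix.mul_apply, avgMatrix, ite_mul, zero_mul, sum_ite, sum_const_zero, add_zero,
    ← mul_sum, div_eq_inv_mul]

theorem mul_abs_div_self_le {a : ℝ} (ha : 0 ≤ a) (b : ℝ) : a * |b / a| ≤ |b| := by
  rcases ha.eq_or_lt with rfl | ha
  · simp
  · rw [abs_div, abs_of_pos ha, mul_div_cancel₀ _ ha.ne']

theorem weightedL1_avgMatrix_mul_le [Fintype κ] [Fintype β] (c : ι → κ) (N : Matrix ι β ℝ) :
    weightedL1 c (avgMatrix c * N) ≤ ∑ i, ∑ j, |N i j| := by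
  rw [weightedL1, ← sum_fiberwise univ c]
  refine sum_le_sum fun k _ => ?_
  rw [mul_sum, sum_comm]
  refine sum_le_sum fun j _ => ?_
  rw [avgMatrix_mul_apply]
  exact (mul_abs_div_self_le (Nat.cast_nonneg _) _).trans (abs_sum_le_sum_abs _ _)

theorem weightedL1_avgMatrix_mul_indicatorMatrix_mul_le [Fintype κ₁] [Fintype κ₂] [Fintype β]
    (c₁ : ι → κ₁) (c₂ : ι → κ₂) (R : Matrix κ₂ β ℝ) :
    weightedL1 c₁ (avgMatrix c₁ * indicatorMatrix c₂ * R) ≤ weightedL1 c₂ R := by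
  rw [Matrix.mul_assoc]
  refine (weightedL1_avgMatrix_mul_le c₁ _).trans_eq ?_
  simp only [indicatorMatrix_mul_apply]
  exact sum_comp_eq_sum_clusterSize_mul c₂ fun l => ∑ j, |R l j|

theorem avgMatrix_mul_indicatorMatrix_mul_avgMatrix [Fintype κ₂] {c₁ : ι → κ₁} {c₂ : ι → κ₂}
    (href : ∀ i i', c₂ i = c₂ i' → c₁ i = c₁ i') :
    avgMatrix c₁ * indicatorMatrix c₂ * avgMatrix c₂ = avgMatrix c₁ := by
  ext k i'
  rw [Matrix.mul_assoc, Matrix.mul_apply]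
  simp only [indicatorMatrix_mul_apply, avgMatrix]
  have hterm : ∀ i, ((if c₁ i = k then (clusterSize c₁ k)⁻¹ else 0) *
      if c₂ i' = c₂ i then (clusterSize c₂ (c₂ i))⁻¹ else 0) =
      if c₂ i = c₂ i' then (if c₁ i' = k then (clusterSize c₁ k)⁻¹ else 0) *
        (clusterSize c₂ (c₂ i'))⁻¹ else 0 := by
    intro i
    by_cases h : c₂ i = c₂ i'
    · simp [h, href i i' h]
    · simp [h, Ne.symm h]
  rw [sum_congr rfl fun i _ => hterm i, sum_ite, sum_const_zero, add_zero, sum_const,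
    nsmul_eq_mul, ← div_eq_mul_inv]
  exact mul_div_cancel₀ _ (clusterSize_apply_ne_zero c₂ i')

theorem avgMatrix_mul_eq_of_refines [Fintype κ₂] {c₁ : ι → κ₁} {c₂ : ι → κ₂}
    (href : ∀ i i', c₂ i = c₂ i' → c₁ i = c₁ i') (M : Matrix ι β ℝ) :
    avgMatrix c₁ * M = avgMatrix c₁ * indicatorMatrix c₂ * (avgMatrix c₂ * M) := by
  rw [← Matrix.mul_assoc, avgMatrix_mul_indicatorMatrix_mul_avgMatrix href]

theorem eq_avgMatrix_mul {c : ι → κ} {M : Matrix ι β ℝ} {Magg : Matrix κ β ℝ}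
    (h : ∀ k j, Magg k j = (∑ i ∈ univ.filter (fun i => c i = k), M i j) /
      ((univ.filter (fun i => c i = k)).card : ℝ)) :
    Magg = avgMatrix c * M := by
  ext k j
  rw [h, avgMatrix_mul_apply]
  rfl

end Aggregation

theorem stmt_6_general {m q n K₁ K₂ : ℕ}
    (f : ∀ {r : ℕ}, Matrix (Fin m) (Fin q) ℝ → Matrix (Fin r) (Fin m) ℝ →
      Matrix (Fin r) (Fin q) ℝ)
    (hf : ∀ {p r : ℕ} (X : Matrix (Fin m) (Fin q) ℝ)
      (W : Matrix (Fin p) (Fin r) ℝ) (A : Matrix (Fin r) (Fin m) ℝ),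
      f X (W * A) = W * f X A)
    (c₁ : Fin n → Fin K₁)
    (c₂ : Fin n → Fin K₂)
    -- `c₂` refines `c₁`: entries in the same `c₂`-cluster lie in the same `c₁`-cluster
    (href : ∀ i i', c₂ i = c₂ i' → c₁ i = c₁ i')
    (B : Matrix (Fin n) (Fin q) ℝ) (A : Matrix (Fin n) (Fin m) ℝ)
    (Bagg₁ : Matrix (Fin K₁) (Fin q) ℝ) (Aagg₁ : Matrix (Fin K₁) (Fin m) ℝ)
    (Bagg₂ : Matrix (Fin K₂) (Fin q) ℝ) (Aagg₂ : Matrix (Fin K₂) (Fin m) ℝ)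
    (hBagg₁ : ∀ k j, Bagg₁ k j =
      (∑ i ∈ univ.filter (fun i => c₁ i = k), B i j) /
        ((univ.filter (fun i => c₁ i = k)).card : ℝ))
    (hAagg₁ : ∀ k j, Aagg₁ k j =
      (∑ i ∈ univ.filter (fun i => c₁ i = k), A i j) /
        ((univ.filter (fun i => c₁ i = k)).card : ℝ))
    (hBagg₂ : ∀ k j, Bagg₂ k j =
      (∑ i ∈ univ.filter (fun i => c₂ i = k), B i j) /
        ((univ.filter (fun i => c₂ i = k)).card : ℝ))
    (hAagg₂ : ∀ k j, Aagg₂ k j =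
      (∑ i ∈ univ.filter (fun i => c₂ i = k), A i j) /
        ((univ.filter (fun i => c₂ i = k)).card : ℝ))
    (Φ : Set (Matrix (Fin m) (Fin q) ℝ))
    (X₁ X₂ : Matrix (Fin m) (Fin q) ℝ) (hX₂ : X₂ ∈ Φ)
    (hopt₁ : ∀ X ∈ Φ,
      (∑ k, ((univ.filter (fun i => c₁ i = k)).card : ℝ) *
        ∑ j, |Bagg₁ k j - f X₁ Aagg₁ k j|) ≤
      (∑ k, ((univ.filter (fun i => c₁ i = k)).card : ℝ) *
        ∑ j, |Bagg₁ k j - f X Aagg₁ k j|)) :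
    (∑ k, ((univ.filter (fun i => c₁ i = k)).card : ℝ) *
        ∑ j, |Bagg₁ k j - f X₁ Aagg₁ k j|) ≤
    (∑ k, ((univ.filter (fun i => c₂ i = k)).card : ℝ) *
        ∑ j, |Bagg₂ k j - f X₂ Aagg₂ k j|) := by
  have hres : Bagg₁ - f X₂ Aagg₁ =
      avgMatrix c₁ * indicatorMatrix c₂ * (Bagg₂ - f X₂ Aagg₂) := by
    rw [Matrix.mul_sub, ← hf, eq_avgMatrix_mul hBagg₁, eq_avgMatrix_mul hAagg₁,
      eq_avgMatrix_mul hBagg₂, eq_avgMatrix_mul hAagg₂, avgMatrix_mul_eq_of_refines href B,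
      avgMatrix_mul_eq_of_refines href A]
  calc weightedL1 c₁ (Bagg₁ - f X₁ Aagg₁)
      ≤ weightedL1 c₁ (Bagg₁ - f X₂ Aagg₁) := hopt₁ X₂ hX₂
    _ ≤ weightedL1 c₂ (Bagg₂ - f X₂ Aagg₂) :=
      hres ▸ weightedL1_avgMatrix_mul_indicatorMatrix_mul_le c₁ c₂ _

/-- Lemma 3 of the paper: the optimal value of the aggregated problem is
nondecreasing under refinement of the partition. -/
theorem stmt_6 {m q n K₁ K₂ : ℕ}
    (f : ∀ {r : ℕ}, Matrix (Fin m) (Fin q) ℝ → Matrix (Fin r) (Fin m) ℝ →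
      Matrix (Fin r) (Fin q) ℝ)
    (hf : ∀ {p r : ℕ} (X : Matrix (Fin m) (Fin q) ℝ)
      (W : Matrix (Fin p) (Fin r) ℝ) (A : Matrix (Fin r) (Fin m) ℝ),
      f X (W * A) = W * f X A)
    (c₁ : Fin n → Fin K₁) (hc₁ : ∀ k, ∃ i, c₁ i = k)
    (c₂ : Fin n → Fin K₂) (hc₂ : ∀ k, ∃ i, c₂ i = k)
    -- `c₂` refines `c₁`: entries in the same `c₂`-cluster lie in the same `c₁`-cluster
    (href : ∀ i i', c₂ i = c₂ i' → c₁ i = c₁ i')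
    (B : Matrix (Fin n) (Fin q) ℝ) (A : Matrix (Fin n) (Fin m) ℝ)
    (Bagg₁ : Matrix (Fin K₁) (Fin q) ℝ) (Aagg₁ : Matrix (Fin K₁) (Fin m) ℝ)
    (Bagg₂ : Matrix (Fin K₂) (Fin q) ℝ) (Aagg₂ : Matrix (Fin K₂) (Fin m) ℝ)
    (hBagg₁ : ∀ k j, Bagg₁ k j =
      (∑ i ∈ univ.filter (fun i => c₁ i = k), B i j) /
        ((univ.filter (fun i => c₁ i = k)).card : ℝ))
    (hAagg₁ : ∀ k j, Aagg₁ k j =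
      (∑ i ∈ univ.filter (fun i => c₁ i = k), A i j) /
        ((univ.filter (fun i => c₁ i = k)).card : ℝ))
    (hBagg₂ : ∀ k j, Bagg₂ k j =
      (∑ i ∈ univ.filter (fun i => c₂ i = k), B i j) /
        ((univ.filter (fun i => c₂ i = k)).card : ℝ))
    (hAagg₂ : ∀ k j, Aagg₂ k j =
      (∑ i ∈ univ.filter (fun i => c₂ i = k), A i j) /
        ((univ.filter (fun i => c₂ i = k)).card : ℝ))
    (Φ : Set (Matrix (Fin m) (Fin q) ℝ))
    (X₁ X₂ : Matrix (Fin m) (Fin q) ℝ) (hX₁ : X₁ ∈ Φ) (hX₂ : X₂ ∈ Φ)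
    (hopt₁ : ∀ X ∈ Φ,
      (∑ k, ((univ.filter (fun i => c₁ i = k)).card : ℝ) *
        ∑ j, |Bagg₁ k j - f X₁ Aagg₁ k j|) ≤
      (∑ k, ((univ.filter (fun i => c₁ i = k)).card : ℝ) *
        ∑ j, |Bagg₁ k j - f X Aagg₁ k j|))
    (hopt₂ : ∀ X ∈ Φ,
      (∑ k, ((univ.filter (fun i => c₂ i = k)).card : ℝ) *
        ∑ j, |Bagg₂ k j - f X₂ Aagg₂ k j|) ≤
      (∑ k, ((univ.filter (fun i => c₂ i = k)).card : ℝ) *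
        ∑ j, |Bagg₂ k j - f X Aagg₂ k j|)) :
    (∑ k, ((univ.filter (fun i => c₁ i = k)).card : ℝ) *
        ∑ j, |Bagg₁ k j - f X₁ Aagg₁ k j|) ≤
    (∑ k, ((univ.filter (fun i => c₂ i = k)).card : ℝ) *
        ∑ j, |Bagg₂ k j - f X₂ Aagg₂ k j|) :=
  stmt_6_general f hf c₁ c₂ href B A Bagg₁ Aagg₁ Bagg₂ Aagg₂ hBagg₁ hAagg₁ hBagg₂ hAagg₂ Φ X₁ X₂ hX₂
    hopt₁
end

section
/- If a cluster C_k is split into two sub-clusters C_{k1}, C_{k2} (nonempty, partitioning C_k), then for every X ∈ Φ, |C_k| ‖B_k^agg − f_k(X,A^agg)‖₁ ≤ |C_{k1}| ‖B_{k1}^agg − f_{k1}(X, A^agg')‖₁ + |C_{k2}| ‖B_{k2}^agg − f_{k2}(X, A^agg')‖₁, where aggregated rows are within-cluster arithmetic means computed before and after the split. That is, splitting a cluster can only increase the (per-X) aggregated objective contribution. -/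
open Finset

/-! Multiplying a cluster's mean residual by the cluster size gives back the residual of the
cluster sums, so the weighted L1 error of a cluster is `∑ⱼ |∑_{i ∈ S} (B i j - f X A i j)|`.
Splitting `S` splits each inner sum in two, and the triangle inequality finishes. -/

theorem card_mul_abs_sum_div_card_sub_sum_div_card {ι : Type*} (T : Finset ι) (b c : ι → ℝ) :
    (#T : ℝ) * |(∑ i ∈ T, b i) / #T - (∑ i ∈ T, c i) / #T| = |∑ i ∈ T, b i - ∑ i ∈ T, c i| := by
  rcases T.eq_empty_or_nonempty with rfl | hT
  · simp
  · have hcard : (0 : ℝ) < #T := by exact_mod_cast hT.card_pos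
    rw [div_sub_div_same, abs_div, Nat.abs_cast, mul_div_cancel₀ _ hcard.ne']

theorem abs_sum_union_sub_sum_union_le {ι α : Type*} [DecidableEq ι] [AddCommGroup α]
    [LinearOrder α] [IsOrderedAddMonoid α] {s t : Finset ι} (hst : Disjoint s t) (b c : ι → α) :
    |∑ i ∈ s ∪ t, b i - ∑ i ∈ s ∪ t, c i| ≤
      |∑ i ∈ s, b i - ∑ i ∈ s, c i| + |∑ i ∈ t, b i - ∑ i ∈ t, c i| := by
  rw [sum_union hst, sum_union hst, add_sub_add_comm]
  exact abs_add_le _ _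

theorem stmt_13_general {m q n : ℕ}
    (f : ∀ {r : ℕ}, Matrix (Fin m) (Fin q) ℝ → Matrix (Fin r) (Fin m) ℝ →
      Matrix (Fin r) (Fin q) ℝ)
    (B : Matrix (Fin n) (Fin q) ℝ) (A : Matrix (Fin n) (Fin m) ℝ)
    (S S₁ S₂ : Finset (Fin n))
    (hdisj : Disjoint S₁ S₂) (hunion : S₁ ∪ S₂ = S)
    (Φ : Set (Matrix (Fin m) (Fin q) ℝ)) :
    ∀ X ∈ Φ,
      (S.card : ℝ) * ∑ j, |(∑ i ∈ S, B i j) / (S.card : ℝ) -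
          (∑ i ∈ S, f X A i j) / (S.card : ℝ)| ≤
      (S₁.card : ℝ) * (∑ j, |(∑ i ∈ S₁, B i j) / (S₁.card : ℝ) -
          (∑ i ∈ S₁, f X A i j) / (S₁.card : ℝ)|) +
      (S₂.card : ℝ) * (∑ j, |(∑ i ∈ S₂, B i j) / (S₂.card : ℝ) -
          (∑ i ∈ S₂, f X A i j) / (S₂.card : ℝ)|) := by
  intro X _
  simp only [mul_sum, card_mul_abs_sum_div_card_sub_sum_div_card, ← sum_add_distrib]
  subst hunion
  exact sum_le_sum fun j _ => abs_sum_union_sub_sum_union_le hdisj _ _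

/-- Splitting a cluster can only increase its contribution to the aggregated
objective: if a nonempty cluster `S` is split into nonempty disjoint sub-clusters
`S₁` and `S₂`, then for every feasible `X` the weighted L1 error of `S` is at
most the sum of the weighted L1 errors of `S₁` and `S₂` (aggregated rows being
within-cluster means, with the corresponding rows of `f` equal to the means of
the rows of `f(X,A)` by Lemma 1). -/
theorem stmt_13 {m q n : ℕ}
    (f : ∀ {r : ℕ}, Matrix (Fin m) (Fin q) ℝ → Matrix (Fin r) (Fin m) ℝ →
      Matrix (Fin r) (Fin q) ℝ)
    (hf : ∀ {p r : ℕ} (X : Matrix (Fin m) (Fin q) ℝ)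
      (W : Matrix (Fin p) (Fin r) ℝ) (A : Matrix (Fin r) (Fin m) ℝ),
      f X (W * A) = W * f X A)
    (B : Matrix (Fin n) (Fin q) ℝ) (A : Matrix (Fin n) (Fin m) ℝ)
    (S S₁ S₂ : Finset (Fin n))
    (hS₁ : S₁.Nonempty) (hS₂ : S₂.Nonempty)
    (hdisj : Disjoint S₁ S₂) (hunion : S₁ ∪ S₂ = S)
    (Φ : Set (Matrix (Fin m) (Fin q) ℝ)) :
    ∀ X ∈ Φ,
      (S.card : ℝ) * ∑ j, |(∑ i ∈ S, B i j) / (S.card : ℝ) -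
          (∑ i ∈ S, f X A i j) / (S.card : ℝ)| ≤
      (S₁.card : ℝ) * (∑ j, |(∑ i ∈ S₁, B i j) / (S₁.card : ℝ) -
          (∑ i ∈ S₁, f X A i j) / (S₁.card : ℝ)|) +
      (S₂.card : ℝ) * (∑ j, |(∑ i ∈ S₂, B i j) / (S₂.card : ℝ) -
          (∑ i ∈ S₂, f X A i j) / (S₂.card : ℝ)|) :=
  stmt_13_general f B A S S₁ S₂ hdisj hunion Φ
end

section
/- In the AID framework applied to constrained L1 regression with cardinality constraint Φ = {x ∈ ℝ^m : ‖x‖₀ = p}: if x̄ optimally solves the weighted aggregated problem min_{‖x‖₀ = p} ∑_k |C_k| |B_k^agg − A_k^agg · x| and within each cluster all residuals B_i − A_i·x̄ share the same sign, then x̄ solves the original subset-selection problem min_{‖x‖₀ = p} ∑_{i=1}^n |B_i − A_i · x|. -/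
/-!
Summing the residuals of a cluster and dividing by its size gives the residual of the
aggregated data, so the weighted aggregated objective at `y` is `∑ₖ |∑_{i ∈ Cₖ} rᵢ(y)|`.
By the triangle inequality this is a lower bound for the original objective `∑ᵢ |rᵢ(y)|`
at every `y`, and at `x̄` the sign condition turns it into an equality. Hence for every
feasible `x`, the original objective at `x̄` equals the aggregated one at `x̄`, which is at
most the aggregated one at `x`, which is at most the original one at `x`.
-/

open Finset

section Fiberwise

variable {ι κ G : Type*} [AddCommGroup G] [LinearOrder G] [IsOrderedAddMonoid G]

theorem Finset.abs_sum_eq_sum_abs_of_sign {s : Finset ι} {f : ι → G}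
    (hf : (∀ i ∈ s, 0 ≤ f i) ∨ (∀ i ∈ s, f i ≤ 0)) :
    |∑ i ∈ s, f i| = ∑ i ∈ s, |f i| := by
  rcases hf with hf | hf
  · rw [abs_of_nonneg (sum_nonneg hf)]
    exact sum_congr rfl fun i hi => (abs_of_nonneg (hf i hi)).symm
  · rw [abs_of_nonpos (sum_nonpos hf), ← sum_neg_distrib]
    exact sum_congr rfl fun i hi => (abs_of_nonpos (hf i hi)).symm

variable [Fintype ι] [Fintype κ] [DecidableEq κ]

theorem Finset.sum_abs_sum_fiberwise_le (g : ι → κ) (f : ι → G) :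
    ∑ k, |∑ i ∈ univ.filter (fun i => g i = k), f i| ≤ ∑ i, |f i| := by
  rw [← sum_fiberwise univ g fun i => |f i|]
  exact sum_le_sum fun k _ => abs_sum_le_sum_abs _ _

theorem Finset.sum_abs_sum_fiberwise_of_sign (g : ι → κ) {f : ι → G}
    (hf : ∀ k, (∀ i ∈ univ.filter (fun i => g i = k), 0 ≤ f i) ∨
      (∀ i ∈ univ.filter (fun i => g i = k), f i ≤ 0)) :
    ∑ k, |∑ i ∈ univ.filter (fun i => g i = k), f i| = ∑ i, |f i| := by
  rw [← sum_fiberwise univ g fun i => |f i|]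
  exact sum_congr rfl fun k _ => abs_sum_eq_sum_abs_of_sign (hf k)

end Fiberwise

section Aggregation

variable {ι μ : Type*} [Fintype μ]

theorem card_mul_mean_sub_mean_mul_sum {𝕜 : Type*} [Field 𝕜] {s : Finset ι}
    (hs : (#s : 𝕜) ≠ 0) (B : ι → 𝕜) (A : Matrix ι μ 𝕜) (y : μ → 𝕜) :
    (#s : 𝕜) * ((∑ i ∈ s, B i) / #s - ∑ j, (∑ i ∈ s, A i j) / #s * y j) =
      ∑ i ∈ s, (B i - ∑ j, A i j * y j) := by
  simp only [div_mul_eq_mul_div, sum_mul, ← sum_div, mul_sub, mul_div_cancel₀ _ hs,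
    sum_sub_distrib, sum_comm (s := s)]

variable {κ : Type*} [Fintype ι] [Fintype κ] [DecidableEq κ]

theorem sum_card_mul_abs_mean_residual {c : ι → κ} (hc : Function.Surjective c)
    (B : ι → ℝ) (A : Matrix ι μ ℝ) (y : μ → ℝ) :
    ∑ k, (#(univ.filter (fun i => c i = k)) : ℝ) *
        |(∑ i ∈ univ.filter (fun i => c i = k), B i) / #(univ.filter (fun i => c i = k)) -
          ∑ j, (∑ i ∈ univ.filter (fun i => c i = k), A i j) /
            #(univ.filter (fun i => c i = k)) * y j| =
      ∑ k, |∑ i ∈ univ.filter (fun i => c i = k), (B i - ∑ j, A i j * y j)| := by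
  refine sum_congr rfl fun k _ => ?_
  obtain ⟨i, hi⟩ := hc k
  have hpos : (0 : ℝ) < #(univ.filter (fun i => c i = k)) :=
    Nat.cast_pos.mpr (card_pos.mpr ⟨i, mem_filter.mpr ⟨mem_univ i, hi⟩⟩)
  rw [← card_mul_mean_sub_mean_mul_sum hpos.ne', abs_mul, abs_of_pos hpos]

end Aggregation

theorem stmt_17_general {n m K p : ℕ}
    (c : Fin n → Fin K) (hc : ∀ k, ∃ i, c i = k)
    (B : Fin n → ℝ) (A : Matrix (Fin n) (Fin m) ℝ)
    (Bagg : Fin K → ℝ) (Aagg : Matrix (Fin K) (Fin m) ℝ)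
    (hBagg : ∀ k, Bagg k = (∑ i ∈ univ.filter (fun i => c i = k), B i) /
      ((univ.filter (fun i => c i = k)).card : ℝ))
    (hAagg : ∀ k j, Aagg k j = (∑ i ∈ univ.filter (fun i => c i = k), A i j) /
      ((univ.filter (fun i => c i = k)).card : ℝ))
    (xbar : Fin m → ℝ)
    (hopt : ∀ x : Fin m → ℝ, (univ.filter (fun j => x j ≠ 0)).card = p →
      (∑ k, ((univ.filter (fun i => c i = k)).card : ℝ) *
        |Bagg k - ∑ j, Aagg k j * xbar j|) ≤
      (∑ k, ((univ.filter (fun i => c i = k)).card : ℝ) *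
        |Bagg k - ∑ j, Aagg k j * x j|))
    (hsign : ∀ k : Fin K,
      (∀ i ∈ univ.filter (fun i => c i = k), 0 ≤ B i - ∑ j, A i j * xbar j) ∨
      (∀ i ∈ univ.filter (fun i => c i = k), B i - ∑ j, A i j * xbar j ≤ 0)) :
    ∀ x : Fin m → ℝ, (univ.filter (fun j => x j ≠ 0)).card = p →
      (∑ i, |B i - ∑ j, A i j * xbar j|) ≤ ∑ i, |B i - ∑ j, A i j * x j| := by
  intro x hx
  have aggregated_eq : ∀ y : Fin m → ℝ,
      ∑ k, ((univ.filter (fun i => c i = k)).card : ℝ) * |Bagg k - ∑ j, Aagg k j * y j| =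
        ∑ k, |∑ i ∈ univ.filter (fun i => c i = k), (B i - ∑ j, A i j * y j)| := by
    intro y
    simp only [hBagg, hAagg]
    exact sum_card_mul_abs_mean_residual hc B A y
  calc (∑ i, |B i - ∑ j, A i j * xbar j|)
      = ∑ k, |∑ i ∈ univ.filter (fun i => c i = k), (B i - ∑ j, A i j * xbar j)| :=
        (sum_abs_sum_fiberwise_of_sign c hsign).symm
    _ ≤ ∑ k, |∑ i ∈ univ.filter (fun i => c i = k), (B i - ∑ j, A i j * x j)| := by
        rw [← aggregated_eq, ← aggregated_eq]
        exact hopt x hx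
    _ ≤ ∑ i, |B i - ∑ j, A i j * x j| := sum_abs_sum_fiberwise_le c _

/-- Optimality condition for subset selection in L1 regression: if `x̄` has
exactly `p` nonzero entries, optimally solves the weighted aggregated problem
over the cardinality-constrained set, and within every cluster all residuals
share a sign, then `x̄` solves the original subset-selection problem. -/
theorem stmt_17 {n m K p : ℕ}
    (c : Fin n → Fin K) (hc : ∀ k, ∃ i, c i = k)
    (B : Fin n → ℝ) (A : Matrix (Fin n) (Fin m) ℝ)
    (Bagg : Fin K → ℝ) (Aagg : Matrix (Fin K) (Fin m) ℝ)
    (hBagg : ∀ k, Bagg k = (∑ i ∈ univ.filter (fun i => c i = k), B i) /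
      ((univ.filter (fun i => c i = k)).card : ℝ))
    (hAagg : ∀ k j, Aagg k j = (∑ i ∈ univ.filter (fun i => c i = k), A i j) /
      ((univ.filter (fun i => c i = k)).card : ℝ))
    (xbar : Fin m → ℝ)
    (hcard : (univ.filter (fun j => xbar j ≠ 0)).card = p)
    (hopt : ∀ x : Fin m → ℝ, (univ.filter (fun j => x j ≠ 0)).card = p →
      (∑ k, ((univ.filter (fun i => c i = k)).card : ℝ) *
        |Bagg k - ∑ j, Aagg k j * xbar j|) ≤
      (∑ k, ((univ.filter (fun i => c i = k)).card : ℝ) *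
        |Bagg k - ∑ j, Aagg k j * x j|))
    (hsign : ∀ k : Fin K,
      (∀ i ∈ univ.filter (fun i => c i = k), 0 ≤ B i - ∑ j, A i j * xbar j) ∨
      (∀ i ∈ univ.filter (fun i => c i = k), B i - ∑ j, A i j * xbar j ≤ 0)) :
    ∀ x : Fin m → ℝ, (univ.filter (fun j => x j ≠ 0)).card = p →
      (∑ i, |B i - ∑ j, A i j * xbar j|) ≤ ∑ i, |B i - ∑ j, A i j * x j| :=
  stmt_17_general c hc B A Bagg Aagg hBagg hAagg xbar hopt hsign
end

section
/- For the orthogonal Procrustes problem min_{XᵀX = I_p} ‖B − AX‖₁ with B, A ∈ ℝ^{n×m}: if X̄ optimally solves the weighted aggregated problem min_{XᵀX=I_p} ∑_k |C_k| ‖B_k^agg − A_k^agg X‖₁ and within every cluster the residual rows B_i − A_i X̄ share coordinatewise signs, then X̄ is a global optimum of the original problem. -/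
open Finset Matrix
open scoped BigOperators

/-!
Averaging the residual rows over a cluster and using the triangle inequality shows that the
weighted aggregated objective never exceeds the original `ℓ¹` objective, at any `X`. When the
residuals of `X̄` have a constant sign on each cluster and coordinate, the triangle inequality
is an equality, so the two objectives agree at `X̄`. Hence the original objective at `X̄`
equals the aggregated one at `X̄`, which is at most the aggregated one at `X`, which is at
most the original one at `X`.
-/

theorem Finset.sum_abs_eq_abs_sum_of_sign {ι G : Type*} [AddCommGroup G] [LinearOrder G]
    [IsOrderedAddMonoid G] {s : Finset ι} {f : ι → G}
    (hf : (∀ i ∈ s, 0 ≤ f i) ∨ (∀ i ∈ s, f i ≤ 0)) :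
    ∑ i ∈ s, |f i| = |∑ i ∈ s, f i| := by
  rcases hf with hf | hf
  · rw [abs_sum_of_nonneg hf]
    exact sum_congr rfl fun i hi => abs_of_nonneg (hf i hi)
  · rw [abs_of_nonpos (sum_nonpos hf), ← sum_neg_distrib]
    exact sum_congr rfl fun i hi => abs_of_nonpos (hf i hi)

section Aggregation

variable {𝕜 ι κ m p : Type*} [Field 𝕜] [LinearOrder 𝕜] [IsStrictOrderedRing 𝕜]
  [Fintype ι] [Fintype m] [DecidableEq κ] (c : ι → κ)

theorem Matrix.mul_apply_of_row_mean {A : Matrix ι m 𝕜} {Aagg : Matrix κ m 𝕜}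
    (hAagg : ∀ k j, Aagg k j = 𝔼 i ∈ univ.filter (c · = k), A i j)
    (Y : Matrix m p 𝕜) (k : κ) (j : p) :
    (Aagg * Y) k j = 𝔼 i ∈ univ.filter (c · = k), (A * Y) i j := by
  simp only [mul_apply, hAagg, expect_mul, ← expect_sum_comm]

variable {B : Matrix ι p 𝕜} {A : Matrix ι m 𝕜} {Bagg : Matrix κ p 𝕜} {Aagg : Matrix κ m 𝕜}

theorem card_mul_aggregated_residual
    (hBagg : ∀ k j, Bagg k j = 𝔼 i ∈ univ.filter (c · = k), B i j)
    (hAagg : ∀ k j, Aagg k j = 𝔼 i ∈ univ.filter (c · = k), A i j)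
    (Y : Matrix m p 𝕜) (k : κ) (j : p) :
    (#(univ.filter (c · = k)) : 𝕜) * (Bagg k j - (Aagg * Y) k j) =
      ∑ i ∈ univ.filter (c · = k), (B i j - (A * Y) i j) := by
  rw [hBagg, mul_apply_of_row_mean c hAagg, ← expect_sub_distrib, card_mul_expect]

theorem card_mul_abs_aggregated_residual
    (hBagg : ∀ k j, Bagg k j = 𝔼 i ∈ univ.filter (c · = k), B i j)
    (hAagg : ∀ k j, Aagg k j = 𝔼 i ∈ univ.filter (c · = k), A i j)
    (Y : Matrix m p 𝕜) (k : κ) (j : p) :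
    (#(univ.filter (c · = k)) : 𝕜) * |Bagg k j - (Aagg * Y) k j| =
      |∑ i ∈ univ.filter (c · = k), (B i j - (A * Y) i j)| := by
  rw [← card_mul_aggregated_residual c hBagg hAagg, abs_mul, Nat.abs_cast]

variable [Fintype κ] [Fintype p]

theorem weighted_aggregated_l1_le
    (hBagg : ∀ k j, Bagg k j = 𝔼 i ∈ univ.filter (c · = k), B i j)
    (hAagg : ∀ k j, Aagg k j = 𝔼 i ∈ univ.filter (c · = k), A i j)
    (Y : Matrix m p 𝕜) :
    ∑ k, (#(univ.filter (c · = k)) : 𝕜) * ∑ j, |Bagg k j - (Aagg * Y) k j| ≤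
      ∑ i, ∑ j, |B i j - (A * Y) i j| := by
  rw [← sum_fiberwise univ c]
  refine sum_le_sum fun k _ => ?_
  rw [mul_sum, sum_comm]
  refine sum_le_sum fun j _ => ?_
  rw [card_mul_abs_aggregated_residual c hBagg hAagg]
  exact abs_sum_le_sum_abs _ _

theorem weighted_aggregated_l1_eq_of_sign
    (hBagg : ∀ k j, Bagg k j = 𝔼 i ∈ univ.filter (c · = k), B i j)
    (hAagg : ∀ k j, Aagg k j = 𝔼 i ∈ univ.filter (c · = k), A i j)
    {Y : Matrix m p 𝕜}
    (hsign : ∀ k j, (∀ i ∈ univ.filter (c · = k), 0 ≤ B i j - (A * Y) i j) ∨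
      (∀ i ∈ univ.filter (c · = k), B i j - (A * Y) i j ≤ 0)) :
    ∑ k, (#(univ.filter (c · = k)) : 𝕜) * ∑ j, |Bagg k j - (Aagg * Y) k j| =
      ∑ i, ∑ j, |B i j - (A * Y) i j| := by
  rw [← sum_fiberwise univ c]
  refine sum_congr rfl fun k _ => ?_
  rw [mul_sum, sum_comm]
  refine sum_congr rfl fun j _ => ?_
  rw [card_mul_abs_aggregated_residual c hBagg hAagg, sum_abs_eq_abs_sum_of_sign (hsign k j)]

end Aggregation

theorem stmt_18_general {n m K : ℕ}
    (B A : Matrix (Fin n) (Fin m) ℝ)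
    (c : Fin n → Fin K)
    (Bagg Aagg : Matrix (Fin K) (Fin m) ℝ)
    (hBagg : ∀ k j, Bagg k j = (∑ i ∈ univ.filter (fun i => c i = k), B i j) /
      ((univ.filter (fun i => c i = k)).card : ℝ))
    (hAagg : ∀ k j, Aagg k j = (∑ i ∈ univ.filter (fun i => c i = k), A i j) /
      ((univ.filter (fun i => c i = k)).card : ℝ))
    (Xbar : Matrix (Fin m) (Fin m) ℝ)
    (hopt : ∀ X : Matrix (Fin m) (Fin m) ℝ, Xᵀ * X = 1 →
      (∑ k, ((univ.filter (fun i => c i = k)).card : ℝ) *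
        ∑ j, |Bagg k j - (Aagg * Xbar) k j|) ≤
      (∑ k, ((univ.filter (fun i => c i = k)).card : ℝ) *
        ∑ j, |Bagg k j - (Aagg * X) k j|))
    (hsign : ∀ k : Fin K, ∀ j : Fin m,
      (∀ i ∈ univ.filter (fun i => c i = k), 0 ≤ B i j - (A * Xbar) i j) ∨
      (∀ i ∈ univ.filter (fun i => c i = k), B i j - (A * Xbar) i j ≤ 0)) :
    ∀ X : Matrix (Fin m) (Fin m) ℝ, Xᵀ * X = 1 →
      (∑ i, ∑ j, |B i j - (A * Xbar) i j|) ≤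
        ∑ i, ∑ j, |B i j - (A * X) i j| := by
  intro X hX
  have hBmean : ∀ k j, Bagg k j = 𝔼 i ∈ univ.filter (c · = k), B i j := by
    simpa only [expect_eq_sum_div_card] using hBagg
  have hAmean : ∀ k j, Aagg k j = 𝔼 i ∈ univ.filter (c · = k), A i j := by
    simpa only [expect_eq_sum_div_card] using hAagg
  calc ∑ i, ∑ j, |B i j - (A * Xbar) i j|
      = ∑ k, (#(univ.filter (c · = k)) : ℝ) * ∑ j, |Bagg k j - (Aagg * Xbar) k j| :=
        (weighted_aggregated_l1_eq_of_sign c hBmean hAmean hsign).symm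
    _ ≤ ∑ k, (#(univ.filter (c · = k)) : ℝ) * ∑ j, |Bagg k j - (Aagg * X) k j| := hopt X hX
    _ ≤ ∑ i, ∑ j, |B i j - (A * X) i j| := weighted_aggregated_l1_le c hBmean hAmean X

/-- Optimality condition specialized to the orthogonal Procrustes problem
`min_{XᵀX = I} ‖B − AX‖₁`: if `X̄` optimally solves the weighted aggregated
problem over orthogonal matrices and within every cluster the residual rows
`B_i − A_i X̄` share coordinatewise signs, then `X̄` is a global optimum of the
original problem. -/
theorem stmt_18 {n m K : ℕ}
    (B A : Matrix (Fin n) (Fin m) ℝ)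
    (c : Fin n → Fin K) (hc : ∀ k, ∃ i, c i = k)
    (Bagg Aagg : Matrix (Fin K) (Fin m) ℝ)
    (hBagg : ∀ k j, Bagg k j = (∑ i ∈ univ.filter (fun i => c i = k), B i j) /
      ((univ.filter (fun i => c i = k)).card : ℝ))
    (hAagg : ∀ k j, Aagg k j = (∑ i ∈ univ.filter (fun i => c i = k), A i j) /
      ((univ.filter (fun i => c i = k)).card : ℝ))
    (Xbar : Matrix (Fin m) (Fin m) ℝ) (hXbar : Xbarᵀ * Xbar = 1)
    (hopt : ∀ X : Matrix (Fin m) (Fin m) ℝ, Xᵀ * X = 1 →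
      (∑ k, ((univ.filter (fun i => c i = k)).card : ℝ) *
        ∑ j, |Bagg k j - (Aagg * Xbar) k j|) ≤
      (∑ k, ((univ.filter (fun i => c i = k)).card : ℝ) *
        ∑ j, |Bagg k j - (Aagg * X) k j|))
    (hsign : ∀ k : Fin K, ∀ j : Fin m,
      (∀ i ∈ univ.filter (fun i => c i = k), 0 ≤ B i j - (A * Xbar) i j) ∨
      (∀ i ∈ univ.filter (fun i => c i = k), B i j - (A * Xbar) i j ≤ 0)) :
    ∀ X : Matrix (Fin m) (Fin m) ℝ, Xᵀ * X = 1 →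
      (∑ i, ∑ j, |B i j - (A * Xbar) i j|) ≤
        ∑ i, ∑ j, |B i j - (A * X) i j| :=
  stmt_18_general B A c Bagg Aagg hBagg hAagg Xbar hopt hsign
end
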